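/- arXiv:math/0001165 — 2 statements merged into one kernel-verified Lean document; each statement's English description precedes it below -/
import Mathlib

section
/- Let F and G be directed forests on the same vertex set with tree components T^F of F and T^G of G, and let D be the intersection of the vertex sets of T^F and T^G. Then the D-exchange of F by G and the D-exchange of G by F are both forests. -/
open Relation

/-- The arc relation of a functional digraph: `F i = some j` means there is an arc `i → j`. -/
def Arc {V : Type*} (F : V → Option V) (i j : V) : Prop := F i = some j

/-- A directed forest: a functional digraph (out-degree ≤ 1) without directed circuits. -/
def IsForest {V : Type*} (F : V → Option V) : Prop :=
  ∀ i, ¬ Relation.TransGen (Arc F) i i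

/-- `j` is accessible from `i` by a directed walk. -/
def Reaches {V : Type*} (F : V → Option V) (i j : V) : Prop :=
  Relation.ReflTransGen (Arc F) i j

open Classical in
/-- The `D`-exchange of `F` by `G`: replace the outgoing arcs (in `F`) of vertices of `D`
by their outgoing arcs in `G`. -/
noncomputable def exchange {V : Type*} (D : Set V) (F G : V → Option V) : V → Option V :=
  fun i => if i ∈ D then G i else F i

/-- The set of vertices of the tree of the forest `F` with root `r`. -/
def treeSet {V : Type*} (F : V → Option V) (r : V) : Set V := {i | Reaches F i r}

/-!
Give the vertices level `0` outside `T_F`, `1` on `D = T_F ∩ T_G` and `2` on `T_F \ T_G`.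
No arc of the exchange raises the level: from `D` it is a `G`-arc and stays in `T_G`, from
`T_F \ T_G` it is an `F`-arc and stays in `T_F`, and an `F`-arc from outside `T_F` cannot
enter `T_F`. Hence a circuit of the exchange keeps a constant level, so its arcs are either
all `G`-arcs (level `1`) or all `F`-arcs, contradicting that `F` and `G` are forests. The
roles of `F` and `G` are symmetric.
-/

theorem Relation.TransGen.cycle_of_antitone {α β : Type*} [PartialOrder β] {R : α → α → Prop}
    (f : α → β) (hf : ∀ x y, R x y → f y ≤ f x) {a : α} (h : TransGen R a a) :
    TransGen (fun x y => R x y ∧ f x = f a) a a := by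
  suffices key : ∀ b, TransGen R a b → f a ≤ f b →
      TransGen (fun x y => R x y ∧ f x = f a) a b from key a h le_rfl
  intro b hab
  induction hab with
  | single hab => exact fun _ => .single ⟨hab, rfl⟩
  | @tail c b hac hcb ih =>
    intro hab
    have hca : f c ≤ f a := by
      have := hac.lift (p := (· ≥ ·)) f hf
      rwa [transGen_eq_self] at this
    have hc : f c = f a := le_antisymm hca (hab.trans (hf _ _ hcb))
    exact (ih hc.ge).tail ⟨hcb, hc⟩

theorem mem_treeSet_of_arc {V : Type*} {F : V → Option V} {r i j : V} (hr : F r = none)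
    (hi : i ∈ treeSet F r) (hij : Arc F i j) : j ∈ treeSet F r := by
  rcases ReflTransGen.cases_head hi with rfl | ⟨k, hik, hkr⟩
  · simp [Arc, hr] at hij
  · rwa [Option.some.inj (hik.symm.trans hij)] at hkr

theorem arc_exchange_of_mem {V : Type*} {D : Set V} {F G : V → Option V} {i j : V}
    (hi : i ∈ D) (h : Arc (exchange D F G) i j) : Arc G i j := by
  simpa [Arc, exchange, hi] using h

theorem arc_exchange_of_notMem {V : Type*} {D : Set V} {F G : V → Option V} {i j : V}
    (hi : i ∉ D) (h : Arc (exchange D F G) i j) : Arc F i j := by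
  simpa [Arc, exchange, hi] using h

open Classical in
noncomputable def exchangeLevel {V : Type*} (F G : V → Option V) (r s i : V) : ℕ :=
  if i ∈ treeSet F r then if i ∈ treeSet G s then 1 else 2 else 0

theorem exchangeLevel_eq_one_iff {V : Type*} {F G : V → Option V} {r s i : V} :
    exchangeLevel F G r s i = 1 ↔ i ∈ treeSet F r ∩ treeSet G s := by
  unfold exchangeLevel
  split_ifs <;> simp_all

theorem exchangeLevel_le_of_arc {V : Type*} {F G : V → Option V} {r s i j : V}
    (hr : F r = none) (hs : G s = none)
    (h : Arc (exchange (treeSet F r ∩ treeSet G s) F G) i j) :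
    exchangeLevel F G r s j ≤ exchangeLevel F G r s i := by
  by_cases hD : i ∈ treeSet F r ∩ treeSet G s
  · have hj : j ∈ treeSet G s := mem_treeSet_of_arc hs hD.2 (arc_exchange_of_mem hD h)
    rw [exchangeLevel_eq_one_iff.mpr hD]
    unfold exchangeLevel
    split_ifs <;> simp_all
  · have hij : Arc F i j := arc_exchange_of_notMem hD h
    by_cases hi : i ∈ treeSet F r
    · have hj : j ∈ treeSet F r := mem_treeSet_of_arc hr hi hij
      unfold exchangeLevel
      split_ifs <;> simp_all
    · have hj : j ∉ treeSet F r := fun hj => hi (ReflTransGen.head hij hj)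
      simp [exchangeLevel, hi, hj]

theorem isForest_exchange_inter_treeSet {V : Type*} {F G : V → Option V} {r s : V}
    (hF : IsForest F) (hG : IsForest G) (hr : F r = none) (hs : G s = none) :
    IsForest (exchange (treeSet F r ∩ treeSet G s) F G) := by
  intro i hcycle
  have hlevel := hcycle.cycle_of_antitone (exchangeLevel F G r s)
    fun _ _ => exchangeLevel_le_of_arc hr hs
  by_cases hi : i ∈ treeSet F r ∩ treeSet G s
  · refine hG i (TransGen.mono (fun x y ⟨hxy, hx⟩ => arc_exchange_of_mem ?_ hxy) _ _ hlevel)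
    rw [← exchangeLevel_eq_one_iff, hx, exchangeLevel_eq_one_iff.mpr hi]
  · refine hF i (TransGen.mono (fun x y ⟨hxy, hx⟩ => arc_exchange_of_notMem ?_ hxy) _ _ hlevel)
    rwa [← exchangeLevel_eq_one_iff, hx, exchangeLevel_eq_one_iff]

/-- If `D` is the intersection of the vertex sets of a tree of `F` (root `r`) and a tree of
`G` (root `s`), then the `D`-exchange of `F` by `G` and the `D`-exchange of `G` by `F` are
forests. -/
theorem exchange_isForest_of_inter_treeSets {V : Type*} (F G : V → Option V) (r s : V)
    (hF : IsForest F) (hG : IsForest G) (hr : F r = none) (hs : G s = none) :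
    IsForest (exchange (treeSet F r ∩ treeSet G s) F G) ∧
      IsForest (exchange (treeSet F r ∩ treeSet G s) G F) := by
  refine ⟨isForest_exchange_inter_treeSet hF hG hr hs, ?_⟩
  rw [Set.inter_comm]
  exact isForest_exchange_inter_treeSet hG hF hs hr
end

section
/- Let V be a weighted digraph on N vertices and suppose the set of spanning forests with exactly k trees is nonempty (1 ≤ k ≤ N-1). Then for every minimal-weight spanning forest F with k+1 trees there exists a minimal-weight spanning forest G with k trees such that the vertex set of every tree of F is contained in the vertex set of some tree of G. -/
open Relation

section Weighted

variable {V : Type*} [Fintype V] [DecidableEq V]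

/-- A spanning forest of the digraph with arc relation `A`. -/
def IsSpanningForest (A : V → V → Prop) (F : V → Option V) : Prop :=
  IsForest F ∧ ∀ i j, F i = some j → A i j

/-- The number of trees (= roots) of a forest. -/
def numTrees (F : V → Option V) : ℕ :=
  (Finset.univ.filter (fun i => F i = none)).card

/-- The weight of a forest: the sum of the weights of its arcs. -/
noncomputable def weight (w : V → V → ℝ) (F : V → Option V) : ℝ :=
  ∑ i, (F i).elim 0 (w i)

/-- `F` is a minimal-weight (extreme) spanning forest with `k` trees. -/
def ExtremeForest (A : V → V → Prop) (w : V → V → ℝ) (k : ℕ) (F : V → Option V) : Prop :=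
  IsSpanningForest A F ∧ numTrees F = k ∧
    ∀ G, IsSpanningForest A G → numTrees G = k → weight w F ≤ weight w G

/-- `φ_k`: the minimum weight of a spanning forest with exactly `k` trees. -/
noncomputable def phi (A : V → V → Prop) (w : V → V → ℝ) (k : ℕ) : ℝ :=
  sInf (weight w '' {F | IsSpanningForest A F ∧ numTrees F = k})

end Weighted

/-!
Among the extreme forests with `k` trees choose `G` closest to `F` in Hamming distance. If `D` is
a union of trees of `F` or of `G`, exchanging the arcs of `F` and `G` on `D` gives two spanning
forests of total weight `w F + w G`; when they have `k` and `k + 1` trees, both are extreme, and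
the choice of `G` forces every disagreement of `G` with `F` into `D`.

As `G` has fewer roots than `F`, some tree `T` of `F` contains no root of `G`. Exchanging on `T`
shows `G = F` off `T`, so the other trees of `F` survive in `G`. If a tree of `G` with root `t`
met `T` without containing the root of `T`, then `F` and `G` would have the same roots on it;
exchanging on its complement gives `G = F` on it, so `t` is the `F`-root of a vertex of `T`,
hence lies in `T`, which is absurd.
-/

open Finset

section Forests

variable {V : Type*}

section Roots

variable {F G : V → Option V} {i j r s : V}

lemma arc_rightUnique (F : V → Option V) : Relator.RightUnique (Arc F) :=
  fun _ _ _ hb hc => Option.some.inj (hb.symm.trans hc)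

lemma Reaches.eq_of_isRoot (hi : F i = none) (h : Reaches F i r) : i = r := by
  rcases h.cases_head with h | ⟨c, hc, _⟩
  · exact h
  · simp [Arc, hi] at hc

lemma Reaches.unique_root (hr : F r = none) (hs : F s = none) (h : Reaches F i r)
    (h' : Reaches F i s) : r = s := by
  rcases ReflTransGen.total_of_right_unique (arc_rightUnique F) h h' with h | h
  · exact Reaches.eq_of_isRoot hr h
  · exact (Reaches.eq_of_isRoot hs h).symm

lemma Reaches.of_arc (hr : F r = none) (hij : F i = some j) (h : Reaches F i r) :
    Reaches F j r := by
  rcases ReflTransGen.total_of_right_unique (arc_rightUnique F) (.single hij) h with h | h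
  · exact h
  · exact Reaches.eq_of_isRoot hr h ▸ .refl

lemma IsForest.exists_root [Finite V] (hF : IsForest F) (i : V) :
    ∃ r, F r = none ∧ Reaches F i r := by
  have : IsTrans V (flip (TransGen (Arc F))) := ⟨fun _ _ _ hab hbc => hbc.trans hab⟩
  have : Std.Irrefl (flip (TransGen (Arc F))) := ⟨hF⟩
  induction i using (Finite.wellFounded_of_trans_of_irrefl (flip (TransGen (Arc F)))).induction
    with | _ i ih
  cases hi : F i with
  | none => exact ⟨i, hi, .refl⟩
  | some j =>
    obtain ⟨r, hr, hjr⟩ := ih j (.single hi)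
    exact ⟨r, hr, .head hi hjr⟩

lemma treeSet_subset_treeSet (h : Set.EqOn G F (treeSet F r)) : treeSet F r ⊆ treeSet G r := by
  intro i hi
  induction hi using ReflTransGen.head_induction_on with
  | refl => exact .refl
  | head hac hcr ih => exact .head ((h (ReflTransGen.head hac hcr)).trans hac) ih

lemma IsForest.exists_root_forall_treeSet_ne_none [Fintype V] [DecidableEq V] (hF : IsForest F)
    (hGF : numTrees G < numTrees F) : ∃ r, F r = none ∧ ∀ i ∈ treeSet F r, G i ≠ none := by
  choose ρ hρ using hF.exists_root
  by_contra! h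
  -- otherwise `ρ` maps the roots of `G` onto the roots of `F`
  refine hGF.not_ge ((card_le_card (t := (univ.filter fun i => G i = none).image ρ)
    fun r hr => ?_).trans card_image_le)
  obtain ⟨i, hir, hi⟩ := h r (by simpa using hr)
  exact mem_image.2 ⟨i, by simpa using hi, Reaches.unique_root (hρ i).1 (by simpa using hr)
    (hρ i).2 hir⟩

end Roots

/-- For a forest, the saturated sets are exactly the unions of its trees. -/
def IsSaturated (F : V → Option V) (D : Set V) : Prop :=
  ∀ ⦃i j⦄, F i = some j → (i ∈ D ↔ j ∈ D)

section Exchange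

variable {D : Set V} {F G : V → Option V} {i r : V}

lemma IsSaturated.compl (hD : IsSaturated F D) : IsSaturated F Dᶜ :=
  fun _ _ hij => (hD hij).not

lemma isSaturated_treeSet (hr : F r = none) : IsSaturated F (treeSet F r) :=
  fun _ _ hij => ⟨Reaches.of_arc hr hij, ReflTransGen.head hij⟩

lemma exchange_of_mem (hi : i ∈ D) : exchange D F G i = G i := if_pos hi

lemma exchange_of_notMem (hi : i ∉ D) : exchange D F G i = F i := if_neg hi

lemma exchange_compl : exchange Dᶜ F G = exchange D G F := by
  funext i
  by_cases hi : i ∈ D <;> simp [exchange, hi]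

lemma IsForest.exchange_of_closed (hF : IsForest F) (hG : IsForest G)
    (hD : ∀ ⦃i j⦄, i ∈ D → G i = some j → j ∈ D) : IsForest (exchange D F G) := by
  have inside : ∀ {i j}, TransGen (Arc (exchange D F G)) i j → i ∈ D →
      TransGen (Arc G) i j ∧ j ∈ D := by
    intro i j h hi
    induction h with
    | single h =>
      rw [Arc, exchange_of_mem hi] at h
      exact ⟨.single h, hD hi h⟩
    | tail _ h ih =>
      obtain ⟨ih, hb⟩ := ih
      rw [Arc, exchange_of_mem hb] at h
      exact ⟨ih.tail h, hD hb h⟩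
  have outside : ∀ {i j}, TransGen (Arc (exchange D F G)) i j → j ∉ D →
      TransGen (Arc F) i j := by
    intro i j h hj
    induction h with
    | single h =>
      rw [Arc, exchange_of_notMem fun hi => hj (inside (.single h) hi).2] at h
      exact .single h
    | @tail b _ _ h ih =>
      have hb : b ∉ D := fun hb => hj (inside (.single h) hb).2
      rw [Arc, exchange_of_notMem hb] at h
      exact (ih hb).tail h
  intro i hi
  by_cases hiD : i ∈ D
  · exact hG i (inside hi hiD).1
  · exact hF i (outside hi hiD)

lemma IsForest.exchange_of_isSaturated (hF : IsForest F) (hG : IsForest G)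
    (hD : IsSaturated F D ∨ IsSaturated G D) : IsForest (exchange D F G) := by
  rcases hD with hD | hD
  · rw [← compl_compl D, exchange_compl]
    exact hG.exchange_of_closed hF fun _ _ hi hij => (hD hij).not.1 hi
  · exact hF.exchange_of_closed hG fun _ _ hi hij => (hD hij).1 hi

lemma IsSpanningForest.exchange_of_isSaturated {A : V → V → Prop} (hF : IsSpanningForest A F)
    (hG : IsSpanningForest A G) (hD : IsSaturated F D ∨ IsSaturated G D) :
    IsSpanningForest A (exchange D F G) := by
  refine ⟨hF.1.exchange_of_isSaturated hG.1 hD, fun i j h => ?_⟩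
  by_cases hi : i ∈ D
  · exact hG.2 i j (by rwa [exchange_of_mem hi] at h)
  · exact hF.2 i j (by rwa [exchange_of_notMem hi] at h)

variable [Fintype V]

lemma sum_exchange_add_sum_exchange {M : Type*} [AddCommMonoid M] (φ : V → Option V → M) :
    ∑ i, φ i (exchange D F G i) + ∑ i, φ i (exchange D G F i) =
      ∑ i, φ i (F i) + ∑ i, φ i (G i) := by
  simp only [← sum_add_distrib]
  refine sum_congr rfl fun i _ => ?_
  by_cases hi : i ∈ D <;> simp [exchange, hi, add_comm]

lemma weight_exchange_add_weight_exchange (w : V → V → ℝ) :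
    weight w (exchange D F G) + weight w (exchange D G F) = weight w F + weight w G :=
  sum_exchange_add_sum_exchange fun i o => o.elim 0 (w i)

lemma numTrees_exchange_add_numTrees_exchange :
    numTrees (exchange D F G) + numTrees (exchange D G F) = numTrees F + numTrees G := by
  simp only [numTrees, card_filter]
  exact sum_exchange_add_sum_exchange fun _ o => if o = none then 1 else 0

lemma numTrees_exchange_of_forall_notMem (h : ∀ i ∉ D, F i = none ↔ G i = none) :
    numTrees (exchange D F G) = numTrees G := by
  unfold numTrees
  congr 1
  ext i
  simp only [mem_filter, mem_univ, true_and]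
  by_cases hi : i ∈ D
  · rw [exchange_of_mem hi]
  · rw [exchange_of_notMem hi, h i hi]

lemma numTrees_exchange_treeSet_add_one [DecidableEq V] (hr : F r = none) (hG : ∀ i ∈ treeSet F r, G i ≠ none) :
    numTrees (exchange (treeSet F r) F G) + 1 = numTrees F := by
  have hroots : univ.filter (fun i => exchange (treeSet F r) F G i = none) =
      (univ.filter fun i => F i = none).erase r := by
    ext i
    simp only [mem_filter, mem_univ, true_and, mem_erase]
    by_cases hi : i ∈ treeSet F r
    · rw [exchange_of_mem hi]
      exact iff_of_false (hG i hi) fun ⟨hne, hFi⟩ => hne (Reaches.eq_of_isRoot hFi hi)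
    · rw [exchange_of_notMem hi]
      exact ⟨fun hFi => ⟨fun hir => hi (hir ▸ .refl), hFi⟩, And.right⟩
  rw [numTrees, numTrees, hroots, card_erase_add_one (by simpa using hr)]

lemma eqOn_compl_of_hammingDist_le [DecidableEq V] (h : hammingDist G F ≤ hammingDist (exchange D F G) F) :
    Set.EqOn G F Dᶜ := by
  have hsub : univ.filter (fun i => exchange D F G i ≠ F i) ⊆ univ.filter fun i => G i ≠ F i := by
    intro i
    by_cases hi : i ∈ D <;> simp [exchange_of_mem, exchange_of_notMem, hi]
  intro i hi
  by_contra hne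
  have := (eq_of_subset_of_card_le hsub h).ge (mem_filter.2 ⟨mem_univ i, hne⟩)
  simp [exchange_of_notMem hi] at this

end Exchange

section Extreme

variable [Fintype V] {A : V → V → Prop} {w : V → V → ℝ} {m n : ℕ}
  {F G : V → Option V}

lemma exists_extremeForest (h : ∃ F, IsSpanningForest A F ∧ numTrees F = n) :
    ∃ G, ExtremeForest A w n G := by
  obtain ⟨G, ⟨hG, hGn⟩, hGmin⟩ := Set.exists_min_image _ (weight w) (Set.toFinite _) h
  exact ⟨G, hG, hGn, fun H hH hHn => hGmin H ⟨hH, hHn⟩⟩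

lemma ExtremeForest.exchange_of_isSaturated {D : Set V} (hF : ExtremeForest A w m F)
    (hG : ExtremeForest A w n G) (hD : IsSaturated F D ∨ IsSaturated G D)
    (hn : numTrees (exchange D F G) = n) : ExtremeForest A w n (exchange D F G) := by
  obtain ⟨hFs, rfl, hFmin⟩ := hF
  obtain ⟨hGs, rfl, hGmin⟩ := hG
  have hX := hFs.exchange_of_isSaturated hGs hD
  have hY := hGs.exchange_of_isSaturated hFs hD.symm
  have hm := numTrees_exchange_add_numTrees_exchange (D := D) (F := F) (G := G)
  have hw := weight_exchange_add_weight_exchange w (D := D) (F := F) (G := G)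
  have hYw := hFmin _ hY (by omega)
  exact ⟨hX, hn, fun H hH hHn => by linarith [hGmin H hH hHn]⟩

end Extreme

lemma exists_treeSet_subset_of_eqOn [Finite V] {F G : V → Option V} {r : V} (hG : IsForest G)
    (hr : F r = none) (hroots : ∀ i ∈ treeSet F r, G i ≠ none)
    (hGF : Set.EqOn G F (treeSet F r)ᶜ)
    (hmin : ∀ t, G t = none → (∀ i ∈ treeSet G t, F i = none ↔ G i = none) →
      Set.EqOn G F (treeSet G t)) :
    ∃ s, G s = none ∧ treeSet F r ⊆ treeSet G s := by
  obtain ⟨s, hs, hrs⟩ := hG.exists_root r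
  refine ⟨s, hs, fun v hv => ?_⟩
  obtain ⟨t, ht, hvt⟩ := hG.exists_root v
  obtain rfl | hts := eq_or_ne t s
  · exact hvt
  have htT : t ∉ treeSet F r := fun h => hroots t h ht
  have hFt : F t = none := (hGF htT).symm.trans ht
  have hrT : r ∉ treeSet G t := fun h => hts (Reaches.unique_root ht hs h hrs)
  have hsame : ∀ i ∈ treeSet G t, F i = none ↔ G i = none := fun i hi =>
    ⟨fun hFi => (hGF fun h => hrT (Reaches.eq_of_isRoot hFi h ▸ hi)).trans hFi,
      fun hGi => Reaches.eq_of_isRoot hGi hi ▸ hFt⟩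
  have hvF : v ∈ treeSet F t := treeSet_subset_treeSet (hmin t ht hsame).symm hvt
  exact absurd (Reaches.unique_root hFt hr hvF hv ▸ ReflTransGen.refl) htT

end Forests

theorem extreme_descendant_exists_general {V : Type*} [Fintype V]
    (A : V → V → Prop) (w : V → V → ℝ) (k : ℕ)
    (hEx : ∃ F, IsSpanningForest A F ∧ numTrees F = k)
    (F : V → Option V) (hF : ExtremeForest A w (k + 1) F) :
    ∃ G, ExtremeForest A w k G ∧
      ∀ r, F r = none → ∃ s, G s = none ∧ treeSet F r ⊆ treeSet G s := by
  classical
  obtain ⟨G, hG, hGmin⟩ := Set.exists_min_image {G | ExtremeForest A w k G} (hammingDist · F)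
    (Set.toFinite _) (exists_extremeForest hEx)
  have hexchange : ∀ D, (IsSaturated F D ∨ IsSaturated G D) → numTrees (exchange D F G) = k →
      Set.EqOn G F Dᶜ := fun D hD hn =>
    eqOn_compl_of_hammingDist_le (hGmin _ (hF.exchange_of_isSaturated hG hD hn))
  obtain ⟨r₀, hr₀, hr₀G⟩ :=
    hF.1.1.exists_root_forall_treeSet_ne_none (G := G) (by rw [hF.2.1, hG.2.1]; omega)
  have hGF : Set.EqOn G F (treeSet F r₀)ᶜ := hexchange _ (.inl (isSaturated_treeSet hr₀)) (by
    have := numTrees_exchange_treeSet_add_one hr₀ hr₀G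
    rw [hF.2.1] at this; omega)
  refine ⟨G, hG, fun r hr => ?_⟩
  obtain rfl | hne := eq_or_ne r r₀
  · refine exists_treeSet_subset_of_eqOn hG.1.1 hr hr₀G hGF fun t ht hsame => ?_
    have := hexchange _ (.inr (isSaturated_treeSet ht).compl)
      ((numTrees_exchange_of_forall_notMem fun i hi => hsame i (not_not.1 hi)).trans hG.2.1)
    rwa [compl_compl] at this
  · have hdisj : treeSet F r ⊆ (treeSet F r₀)ᶜ := fun i hi hi₀ =>
      hne (Reaches.unique_root hr hr₀ hi hi₀)
    exact ⟨r, (hGF (hdisj .refl)).trans hr, treeSet_subset_treeSet (hGF.mono hdisj)⟩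

/-- For every minimal-weight spanning forest `F` with `k+1` trees there is a minimal-weight
spanning forest `G` with `k` trees such that the vertex set of every tree of `F` is contained
in the vertex set of some tree of `G`. -/
theorem extreme_descendant_exists {V : Type*} [Fintype V] [DecidableEq V]
    (A : V → V → Prop) (w : V → V → ℝ) (k : ℕ)
    (hk : 1 ≤ k) (hk' : k ≤ Fintype.card V - 1)
    (hEx : ∃ F, IsSpanningForest A F ∧ numTrees F = k)
    (F : V → Option V) (hF : ExtremeForest A w (k + 1) F) :
    ∃ G, ExtremeForest A w k G ∧
      ∀ r, F r = none → ∃ s, G s = none ∧ treeSet F r ⊆ treeSet G s :=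
  extreme_descendant_exists_general A w k hEx F hF
end
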